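/- For the product measure ν_⊗ with density (1/2)cos x cos y dx dy and 0 < λ ≤ 1, the transversal resistance equals R_T[ν_⊗, λ] = (10λ + λ³)π/80. -/

import Mathlib

open Real MeasureTheory

/-- the product measure `ν_⊗` with density `(1/2) cos x cos y` on the square. -/
noncomputable def nuProd : Measure (ℝ × ℝ) :=
  (volume.restrict ((Set.Icc (-(π/2)) (π/2)) ×ˢ (Set.Icc (-(π/2)) (π/2)))).withDensity
    (fun p => ENNReal.ofReal ((1/2) * Real.cos p.1 * Real.cos p.2))

noncomputable def zeta (x lam : ℝ) : ℝ :=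
  Real.arcsin (Real.sqrt (1 - lam^2 * Real.cos x ^ 2))

/-- transversal component of the cost `c(x,y,λ)` for `0 < λ ≤ 1`. -/
noncomputable def cT (lam : ℝ) (p : ℝ × ℝ) : ℝ :=
  (3/4) * ((lam * Real.sin p.1 + Real.sin (zeta p.1 lam))^3 / Real.sin (zeta p.1 lam)) *
    Real.cos ((p.1 - p.2)/2) * Real.cos (zeta p.1 lam + (p.1 - p.2)/2)

/-!
Write `s = sin ζ = √(1 - λ² cos² x)` and `d = (x - y) / 2`. For `|x| ≤ π/2` we have
`cos ζ = λ cos x`, so `cT = (3/4) (λ sin x + s)³ / s · cos d · (λ cos x cos d - s sin d)`.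
The measure and `s` are invariant under `(x, y) ↦ (-x, -y)`, which flips the signs of `sin x`
and `d`; in the sum of the integrand and its reflection every term without a factor `s` cancels,
so the division by `s` disappears and the even part `cTEven` is a trigonometric polynomial.
Its integral is computed by Fubini and explicit antiderivatives.
-/

open intervalIntegral

section Zeta

variable (x : ℝ) {lam : ℝ}

lemma sin_zeta : sin (zeta x lam) = √(1 - lam ^ 2 * cos x ^ 2) :=
  sin_arcsin (by linarith [sqrt_nonneg (1 - lam ^ 2 * cos x ^ 2)])
    (sqrt_le_one.mpr (by nlinarith [sq_nonneg (lam * cos x)]))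

lemma one_sub_sq_mul_cos_sq_nonneg (hl : lam ^ 2 ≤ 1) : 0 ≤ 1 - lam ^ 2 * cos x ^ 2 := by
  nlinarith [cos_sq_le_one x, sq_nonneg lam, sq_nonneg (cos x)]

lemma sin_zeta_sq (hl : lam ^ 2 ≤ 1) : sin (zeta x lam) ^ 2 = 1 - lam ^ 2 * cos x ^ 2 := by
  rw [sin_zeta, sq_sqrt (one_sub_sq_mul_cos_sq_nonneg x hl)]

lemma cos_zeta (hl : lam ^ 2 ≤ 1) : cos (zeta x lam) = |lam * cos x| := by
  rw [zeta, cos_arcsin, sq_sqrt (one_sub_sq_mul_cos_sq_nonneg x hl), ← sqrt_sq_eq_abs]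
  ring_nf

lemma abs_mul_sin_le_sin_zeta (hl : lam ^ 2 ≤ 1) : |lam * sin x| ≤ sin (zeta x lam) := by
  rw [sin_zeta]
  exact abs_le_sqrt (by nlinarith [sin_sq_add_cos_sq x, sq_nonneg (cos x)])

end Zeta

lemma zeta_neg (x lam : ℝ) : zeta (-x) lam = zeta x lam := by
  rw [zeta, zeta, cos_neg]

lemma abs_add_pow_three_div_le {a s : ℝ} (h : |a| ≤ s) : |(a + s) ^ 3 / s| ≤ 8 * s ^ 2 := by
  obtain ⟨ha, ha'⟩ := abs_le.mp h
  rcases (abs_nonneg a).trans h |>.eq_or_lt with hs | hs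
  · simp [← hs]
  · have has : 0 ≤ a + s := by linarith
    rw [abs_of_nonneg (by positivity), div_le_iff₀ hs]
    calc (a + s) ^ 3 ≤ (2 * s) ^ 3 := by gcongr; linarith
      _ = 8 * s ^ 2 * s := by ring

lemma abs_cT_le {lam : ℝ} (hl : lam ^ 2 ≤ 1) (p : ℝ × ℝ) : |cT lam p| ≤ 6 := by
  have hs := abs_mul_sin_le_sin_zeta p.1 hl
  have hs1 : sin (zeta p.1 lam) ^ 2 ≤ 1 := sin_sq_le_one _
  rw [cT, abs_mul, abs_mul, abs_mul]
  calc |(3 / 4 : ℝ)| * |(lam * sin p.1 + sin (zeta p.1 lam)) ^ 3 / sin (zeta p.1 lam)|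
        * |cos ((p.1 - p.2) / 2)| * |cos (zeta p.1 lam + (p.1 - p.2) / 2)|
      ≤ 3 / 4 * (8 * 1) * 1 * 1 := by
        gcongr
        · norm_num
        · exact (abs_add_pow_three_div_le hs).trans (by linarith)
        · exact abs_cos_le_one _
        · exact abs_cos_le_one _
    _ = 6 := by norm_num

lemma measurable_cT (lam : ℝ) : Measurable (cT lam) := by
  unfold cT zeta
  fun_prop

lemma integrableOn_density_mul_cT {lam : ℝ} (hl : lam ^ 2 ≤ 1) :
    IntegrableOn (fun p => 1 / 2 * cos p.1 * cos p.2 * cT lam p)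
      (Set.Icc (-(π/2)) (π/2) ×ˢ Set.Icc (-(π/2)) (π/2)) := by
  refine Measure.integrableOn_of_bounded (isCompact_Icc.prod isCompact_Icc).measure_lt_top.ne
    (by have := measurable_cT lam; fun_prop) (M := 1 / 2 * 1 * 1 * 6) (ae_of_all _ fun p => ?_)
  rw [norm_mul, norm_mul, norm_mul]
  gcongr
  · norm_num
  · exact abs_cos_le_one _
  · exact abs_cos_le_one _
  · exact abs_cT_le hl p

-- With `s = 0` the hypothesis forces `a = 0`, so the junk values of `/ 0` do no harm.
lemma add_pow_three_div_mul_add_sub_pow_three_div_mul {a s : ℝ} (h : |a| ≤ s) (P v : ℝ) :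
    (a + s) ^ 3 / s * (P - s * v) + (s - a) ^ 3 / s * (P + s * v)
      = 2 * (P * (3 * a ^ 2 + s ^ 2) - v * (a ^ 3 + 3 * a * s ^ 2)) := by
  rcases (abs_nonneg a).trans h |>.eq_or_lt with hs | hs
  · obtain rfl : a = 0 := abs_nonpos_iff.mp (hs ▸ h)
    simp [← hs]
  · field_simp
    ring

noncomputable def cTEven (lam : ℝ) (p : ℝ × ℝ) : ℝ :=
  3 / 4 * lam * cos ((p.1 - p.2) / 2) *
    (cos p.1 * cos ((p.1 - p.2) / 2) * (1 - lam ^ 2 + 4 * lam ^ 2 * sin p.1 ^ 2)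
      - sin p.1 * sin ((p.1 - p.2) / 2) * (3 * (1 - lam ^ 2) + 4 * lam ^ 2 * sin p.1 ^ 2))

@[fun_prop]
lemma continuous_cTEven (lam : ℝ) : Continuous (cTEven lam) := by
  unfold cTEven
  fun_prop

lemma cT_add_cT_neg {lam : ℝ} (h0 : 0 ≤ lam) (hl : lam ^ 2 ≤ 1) {p : ℝ × ℝ}
    (hp : 0 ≤ cos p.1) :
    cT lam p + cT lam (-p) = 2 * cTEven lam p := by
  obtain ⟨x, y⟩ := p
  have hcos : cos (zeta x lam) = lam * cos x := by
    rw [cos_zeta x hl, abs_of_nonneg (mul_nonneg h0 hp)]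
  have hd : (-x - -y) / 2 = -((x - y) / 2) := by ring
  simp only [cT, cTEven, Prod.fst_neg, Prod.snd_neg, zeta_neg, sin_neg, hd, cos_neg,
    ← sub_eq_add_neg, cos_add, cos_sub, hcos]
  set d := (x - y) / 2
  have hsym := add_pow_three_div_mul_add_sub_pow_three_div_mul (abs_mul_sin_le_sin_zeta x hl)
    (lam * cos x * cos d) (sin d)
  linear_combination 3 / 4 * cos d * hsym
    + 3 / 2 * lam * cos d * (cos x * cos d - 3 * sin x * sin d) * sin_zeta_sq x hl
    + 3 / 2 * lam ^ 3 * cos d * (3 * sin x * sin d - cos x * cos d) * sin_sq_add_cos_sq x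

section Symmetrization

variable {G : Type*} [MeasurableSpace G] [InvolutiveNeg G] [MeasurableNeg G]
  (μ : Measure G) [μ.IsNegInvariant] {s : Set G}

lemma setIntegral_comp_neg_of_neg_eq (hs : -s = s) (f : G → ℝ) :
    ∫ x in s, f (-x) ∂μ = ∫ x in s, f x ∂μ := by
  simpa [Set.neg_preimage, hs] using
    (Measure.measurePreserving_neg μ).setIntegral_preimage_emb measurableEmbedding_neg f s

lemma setIntegral_eq_setIntegral_half_add_comp_neg (hs : -s = s) {f : G → ℝ}
    (hf : IntegrableOn f s μ) :
    ∫ x in s, f x ∂μ = ∫ x in s, (f x + f (-x)) / 2 ∂μ := by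
  have hf' : IntegrableOn (fun x => f (-x)) s μ := by
    simpa [Function.comp_def, Set.neg_preimage, hs] using
      ((Measure.measurePreserving_neg μ).integrableOn_comp_preimage
        measurableEmbedding_neg).mpr hf
  rw [MeasureTheory.integral_div, integral_add hf hf', setIntegral_comp_neg_of_neg_eq μ hs]
  ring

end Symmetrization

lemma integral_nuProd (f : ℝ × ℝ → ℝ) :
    ∫ p, f p ∂nuProd
      = ∫ p in Set.Icc (-(π/2)) (π/2) ×ˢ Set.Icc (-(π/2)) (π/2),
          1 / 2 * cos p.1 * cos p.2 * f p := by
  rw [nuProd, integral_withDensity_eq_integral_toReal_smul (by fun_prop)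
    (ae_of_all _ fun _ => ENNReal.ofReal_lt_top)]
  refine setIntegral_congr_fun (measurableSet_Icc.prod measurableSet_Icc) fun p ⟨hx, hy⟩ => ?_
  have := cos_nonneg_of_mem_Icc hx
  have := cos_nonneg_of_mem_Icc hy
  rw [ENNReal.toReal_ofReal (by positivity), smul_eq_mul]

lemma setIntegral_Icc_prod_Icc {f : ℝ × ℝ → ℝ} {a b c d : ℝ}
    (hab : a ≤ b) (hcd : c ≤ d) (hf : IntegrableOn f (Set.Icc a b ×ˢ Set.Icc c d)) :
    ∫ p in Set.Icc a b ×ˢ Set.Icc c d, f p = ∫ x in a..b, ∫ y in c..d, f (x, y) := by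
  rw [Measure.volume_eq_prod, setIntegral_prod f hf, integral_of_le hab,
    ← integral_Icc_eq_integral_Ioc]
  refine setIntegral_congr_fun measurableSet_Icc fun x _ => ?_
  rw [integral_of_le hcd, integral_Icc_eq_integral_Ioc]

lemma integral_cos_add_cos_sq_add_sin_mul_cos (P Q R : ℝ) :
    ∫ y in -(π/2)..π/2, (P * cos y + Q * cos y ^ 2 + R * (sin y * cos y))
      = 2 * P + π / 2 * Q := by
  have hderiv (y : ℝ) : HasDerivAt
      (fun y => P * sin y + Q * ((y + sin y * cos y) / 2) + R * (sin y ^ 2 / 2))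
      (P * cos y + Q * cos y ^ 2 + R * (sin y * cos y)) y := by
    refine ((((hasDerivAt_sin y).const_mul P).add ((((hasDerivAt_id y).add
      ((hasDerivAt_sin y).mul (hasDerivAt_cos y))).div_const 2).const_mul Q)).add
      ((((hasDerivAt_sin y).pow 2).div_const 2).const_mul R)).congr_deriv ?_
    linear_combination (-Q / 2) * sin_sq_add_cos_sq y
  rw [integral_eq_sub_of_hasDerivAt (fun y _ => hderiv y)
    (Continuous.intervalIntegrable (by fun_prop) _ _)]
  simp
  ring

lemma integral_poly_sin_mul_cos (a₀ a₂ a₄ : ℝ) :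
    ∫ x in -(π/2)..π/2, (a₀ + a₂ * sin x ^ 2 + a₄ * sin x ^ 4) * cos x
      = 2 * a₀ + 2 / 3 * a₂ + 2 / 5 * a₄ := by
  have hderiv (x : ℝ) : HasDerivAt
      (fun x => a₀ * sin x + a₂ * (sin x ^ 3 / 3) + a₄ * (sin x ^ 5 / 5))
      ((a₀ + a₂ * sin x ^ 2 + a₄ * sin x ^ 4) * cos x) x := by
    refine ((((hasDerivAt_sin x).const_mul a₀).add
      ((((hasDerivAt_sin x).pow 3).div_const 3).const_mul a₂)).add
      ((((hasDerivAt_sin x).pow 5).div_const 5).const_mul a₄)).congr_deriv ?_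
    push_cast
    ring
  rw [integral_eq_sub_of_hasDerivAt (fun x _ => hderiv x)
    (Continuous.intervalIntegrable (by fun_prop) _ _)]
  simp
  ring

lemma integral_cos_mul_cos_half_sub_sq (x : ℝ) :
    ∫ y in -(π/2)..π/2, cos y * cos ((x - y) / 2) ^ 2 = 1 + π / 4 * cos x := by
  have h (y : ℝ) : cos y * cos ((x - y) / 2) ^ 2
      = 1 / 2 * cos y + cos x / 2 * cos y ^ 2 + sin x / 2 * (sin y * cos y) := by
    rw [cos_sq, mul_div_cancel₀ _ two_ne_zero, cos_sub]
    ring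
  simp_rw [h, integral_cos_add_cos_sq_add_sin_mul_cos]
  ring

lemma integral_cos_mul_sin_half_sub_mul_cos_half_sub (x : ℝ) :
    ∫ y in -(π/2)..π/2, cos y * (sin ((x - y) / 2) * cos ((x - y) / 2)) = π / 4 * sin x := by
  have h (y : ℝ) : cos y * (sin ((x - y) / 2) * cos ((x - y) / 2))
      = 0 * cos y + sin x / 2 * cos y ^ 2 + -cos x / 2 * (sin y * cos y) := by
    have h2 := sin_two_mul ((x - y) / 2)
    rw [mul_div_cancel₀ _ two_ne_zero, sin_sub] at h2
    linear_combination -cos y / 2 * h2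
  simp_rw [h, integral_cos_add_cos_sq_add_sin_mul_cos]
  ring

lemma integral_density_mul_cTEven (lam x : ℝ) :
    ∫ y in -(π/2)..π/2, 1 / 2 * cos x * cos y * cTEven lam (x, y)
      = 3 * lam / 8 * cos x
          * (cos x * (1 - lam ^ 2 + 4 * lam ^ 2 * sin x ^ 2) * (1 + π / 4 * cos x)
            - sin x * (3 * (1 - lam ^ 2) + 4 * lam ^ 2 * sin x ^ 2) * (π / 4 * sin x)) := by
  set α := 3 * lam / 8 * cos x * (cos x * (1 - lam ^ 2 + 4 * lam ^ 2 * sin x ^ 2))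
  set β := 3 * lam / 8 * cos x * (sin x * (3 * (1 - lam ^ 2) + 4 * lam ^ 2 * sin x ^ 2))
  have h (y : ℝ) : 1 / 2 * cos x * cos y * cTEven lam (x, y)
      = α * (cos y * cos ((x - y) / 2) ^ 2)
        - β * (cos y * (sin ((x - y) / 2) * cos ((x - y) / 2))) := by
    simp only [cTEven, α, β]
    ring
  simp_rw [h]
  rw [integral_sub (Continuous.intervalIntegrable (by fun_prop) _ _)
      (Continuous.intervalIntegrable (by fun_prop) _ _),
    intervalIntegral.integral_const_mul, intervalIntegral.integral_const_mul,
    integral_cos_mul_cos_half_sub_sq,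
    integral_cos_mul_sin_half_sub_mul_cos_half_sub]
  ring

lemma integral_integral_density_mul_cTEven (lam : ℝ) :
    ∫ x in -(π/2)..π/2, ∫ y in -(π/2)..π/2, 1 / 2 * cos x * cos y * cTEven lam (x, y)
      = (10 * lam + lam ^ 3) * π / 80 := by
  have h (x : ℝ) : 3 * lam / 8 * cos x
        * (cos x * (1 - lam ^ 2 + 4 * lam ^ 2 * sin x ^ 2) * (1 + π / 4 * cos x)
          - sin x * (3 * (1 - lam ^ 2) + 4 * lam ^ 2 * sin x ^ 2) * (π / 4 * sin x))
      = 3 * lam / 8 * (1 - lam ^ 2) * cos x ^ 2 + 3 * lam ^ 3 / 2 * (sin x ^ 2 * cos x ^ 2)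
        + 3 * lam * π / 32
          * ((1 - lam ^ 2) + (8 * lam ^ 2 - 4) * sin x ^ 2 + (-8 * lam ^ 2) * sin x ^ 4)
          * cos x := by
    linear_combination 3 * lam * π / 32 * (1 - lam ^ 2 + 4 * lam ^ 2 * sin x ^ 2) * cos x
      * sin_sq_add_cos_sq x
  simp_rw [integral_density_mul_cTEven, h, mul_assoc (3 * lam * π / 32)]
  rw [integral_add (Continuous.intervalIntegrable (by fun_prop) _ _)
      (Continuous.intervalIntegrable (by fun_prop) _ _),
    integral_add (Continuous.intervalIntegrable (by fun_prop) _ _)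
      (Continuous.intervalIntegrable (by fun_prop) _ _),
    intervalIntegral.integral_const_mul, intervalIntegral.integral_const_mul,
    intervalIntegral.integral_const_mul, integral_cos_sq, integral_sin_sq_mul_cos_sq,
    integral_poly_sin_mul_cos]
  simp [show 4 * (π / 2) = 2 * π by ring]
  ring

theorem stmt_13 (lam : ℝ) (h0 : 0 < lam) (h1 : lam ≤ 1) :
    (∫ p, cT lam p ∂nuProd) = (10 * lam + lam^3) * π / 80 := by
  have hl : lam ^ 2 ≤ 1 := by nlinarith
  have hπ : -(π/2) ≤ π/2 := by linarith [pi_pos]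
  set I := Set.Icc (-(π/2)) (π/2)
  have hI : -(I ×ˢ I) = I ×ˢ I := by rw [Set.neg_prod, Set.neg_Icc, neg_neg]
  calc ∫ p, cT lam p ∂nuProd
      = ∫ p in I ×ˢ I, 1 / 2 * cos p.1 * cos p.2 * cT lam p := integral_nuProd _
    _ = ∫ p in I ×ˢ I, (1 / 2 * cos p.1 * cos p.2 * cT lam p
          + 1 / 2 * cos (-p).1 * cos (-p).2 * cT lam (-p)) / 2 :=
        setIntegral_eq_setIntegral_half_add_comp_neg volume hI (integrableOn_density_mul_cT hl)
    _ = ∫ p in I ×ˢ I, 1 / 2 * cos p.1 * cos p.2 * cTEven lam p := by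
        refine setIntegral_congr_fun (measurableSet_Icc.prod measurableSet_Icc)
          fun p ⟨hx, _⟩ => ?_
        simp only [Prod.fst_neg, Prod.snd_neg, cos_neg]
        linear_combination
          1 / 4 * cos p.1 * cos p.2 * cT_add_cT_neg h0.le hl (cos_nonneg_of_mem_Icc hx)
    _ = ∫ x in -(π/2)..π/2, ∫ y in -(π/2)..π/2, 1 / 2 * cos x * cos y * cTEven lam (x, y) :=
        setIntegral_Icc_prod_Icc hπ hπ <|
          (by fun_prop : Continuous _).continuousOn.integrableOn_compact
            (isCompact_Icc.prod isCompact_Icc)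
    _ = (10 * lam + lam ^ 3) * π / 80 := integral_integral_density_mul_cTEven lam
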